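/- arXiv:math/0609198 — 8 statements merged into one kernel-verified Lean document; each statement's English description precedes it below -/
import Mathlib

section
/- Let Φ be an invertible n×n complex matrix whose spectrum is contained in ℂ \ (-∞,0] (i.e., Φ has no eigenvalue that is a non-positive real number). Then the improper integral B = (Φ - I) ∫₀^∞ (1/(1+μ)) (μI + Φ)⁻¹ dμ converges (as a Bochner integral of a matrix-valued function on [0,∞)), and the matrix B is a logarithm of Φ, i.e., exp(B) = Φ. -/
attribute [local instance] Matrix.normedAddCommGroup Matrix.normedSpace

/-!
The substitution `u = 1 / (1 + μ)` turns `(Φ - I) ∫₀^∞ (1 + μ)⁻¹ (μI + Φ)⁻¹ dμ` into the classical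
`L(1)`, where `L(t) = (Φ - I) ∫₀ᵗ (I + u(Φ - I))⁻¹ du`; the integrand is continuous because the
spectral hypothesis makes every point of the segment from `I` to `Φ` invertible. All `L(t)`
commute, so `t ↦ exp(-L(t)) (I + t(Φ - I))` has derivative zero, and comparing its values at
`t = 0` and `t = 1` gives `exp(L(1)) = Φ`.

This works in any real Banach algebra. Matrices with the entrywise sup norm are not one, so the
matrix statement is transported along `Matrix.toEuclideanCLM`.
-/

open MeasureTheory Set Filter NormedSpace
open scoped Ring

theorem Commute.ringInverse_right {M₀ : Type*} [MonoidWithZero M₀] {a b : M₀}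
    (h : Commute a b) : Commute a b⁻¹ʳ := by
  by_cases hb : IsUnit b
  · obtain ⟨u, rfl⟩ := hb
    rw [Ring.inverse_unit]
    exact h.units_inv_right
  · rw [Ring.inverse_non_unit b hb]
    exact Commute.zero_right a

theorem Ring.inverse_smul {𝕜 A : Type*} [Field 𝕜] [Ring A] [Algebra 𝕜 A] {c : 𝕜} (hc : c ≠ 0)
    (y : A) : (c • y)⁻¹ʳ = c⁻¹ • y⁻¹ʳ := by
  by_cases hy : IsUnit y
  · have hcy : IsUnit (c • y) := (isUnit_smul_iff (Units.mk0 c hc) y).mpr hy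
    rw [eq_comm, ← one_mul (c • y)⁻¹ʳ, Ring.eq_mul_inverse_iff_mul_eq _ _ _ hcy,
      smul_mul_smul_comm, inv_mul_cancel₀ hc, Ring.inverse_mul_cancel y hy, one_smul]
  · have hcy : ¬IsUnit (c • y) := by rwa [← isUnit_smul_iff (Units.mk0 c hc) y] at hy
    rw [Ring.inverse_non_unit y hy, Ring.inverse_non_unit _ hcy, smul_zero]

theorem map_ringInverse {F R S : Type*} [MonoidWithZero R] [MonoidWithZero S] [EquivLike F R S]
    [MulEquivClass F R S] (f : F) (x : R) : f x⁻¹ʳ = (f x)⁻¹ʳ := by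
  by_cases hx : IsUnit x
  · obtain ⟨u, rfl⟩ := hx
    rw [Ring.inverse_unit]
    exact (Ring.inverse_unit (Units.map (f : R →* S) u)).symm
  · rw [Ring.inverse_non_unit x hx, Ring.inverse_non_unit _ (by rwa [isUnit_map_iff]), map_zero]

theorem map_exp_of_continuous {𝕂 𝔸 𝔹 F : Type*} [RCLike 𝕂] [NormedRing 𝔸] [NormedAlgebra 𝕂 𝔸]
    [CompleteSpace 𝔸] [Ring 𝔹] [Algebra 𝕂 𝔹] [TopologicalSpace 𝔹] [IsTopologicalRing 𝔹]
    [T2Space 𝔹] [FunLike F 𝔸 𝔹] [AlgHomClass F 𝕂 𝔸 𝔹] (f : F) (hf : Continuous f) (x : 𝔸) :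
    f (exp x) = exp (f x) := by
  simp only [exp_eq_tsum 𝕂]
  rw [← ((expSeries_summable' (𝕂 := 𝕂) x).hasSum.map f hf).tsum_eq]
  simp only [Function.comp_def, map_smul, map_pow]

section BanachAlgebra

variable {𝔸 : Type*} [NormedRing 𝔸] [NormedAlgebra ℝ 𝔸] [CompleteSpace 𝔸]

theorem hasDerivAt_exp_of_commute {F : ℝ → 𝔸} {F' : 𝔸} {t : ℝ} (hF : HasDerivAt F F' t)
    (hcomm : ∀ s, Commute (F t) (F s)) :
    HasDerivAt (fun s => exp (F s)) (exp (F t) * F') t := by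
  let _ : NormedAlgebra ℚ 𝔸 := NormedAlgebra.restrictScalars ℚ ℝ 𝔸
  have hsplit : (fun s => exp (F s)) = fun s => exp (F t) * exp (F s - F t) := funext fun s => by
    rw [← exp_add_of_commute ((hcomm s).sub_right (Commute.refl _)), add_sub_cancel]
  have hshift : HasDerivAt (fun s => exp (F s - F t)) F' t := by
    simpa only [Function.comp_def, one_apply_eq_self] using
      (hasFDerivAt_exp_zero (𝕂 := ℝ)).comp_hasDerivAt_of_eq t (hF.sub_const (F t))
        (sub_self (F t)).symm
  rw [hsplit]
  exact hshift.const_mul (exp (F t))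

theorem Commute.intervalIntegral_right {y : 𝔸} {f : ℝ → 𝔸} (h : ∀ u, Commute y (f u))
    (a b : ℝ) : Commute y (∫ u in a..b, f u) := by
  by_cases hf : IntervalIntegrable f volume a b
  · have hl := (ContinuousLinearMap.mul ℝ 𝔸 y).intervalIntegral_comp_comm hf
    have hr := ((ContinuousLinearMap.mul ℝ 𝔸).flip y).intervalIntegral_comp_comm hf
    simp only [ContinuousLinearMap.mul_apply', ContinuousLinearMap.flip_apply] at hl hr
    rw [Commute, SemiconjBy, ← hl, ← hr]
    exact intervalIntegral.integral_congr fun u _ => h u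
  · rw [intervalIntegral.integral_undef hf]
    exact Commute.zero_right y

section Segment

variable (x : 𝔸)

noncomputable def segmentLog (t : ℝ) : 𝔸 := x * ∫ u in (0:ℝ)..t, (1 + u • x)⁻¹ʳ

theorem isOpen_setOf_isUnit_one_add_smul : IsOpen {u : ℝ | IsUnit (1 + u • x)} :=
  Units.isOpen.preimage (by fun_prop)

theorem continuousOn_inverse_one_add_smul :
    ContinuousOn (fun u : ℝ => (1 + u • x)⁻¹ʳ) {u | IsUnit (1 + u • x)} := by
  rintro u ⟨v, hv⟩
  exact (ContinuousAt.comp (g := Ring.inverse) (hv ▸ NormedRing.inverse_continuousAt v)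
    (by fun_prop)).continuousWithinAt

theorem commute_segmentLog (s t : ℝ) : Commute (segmentLog x s) (segmentLog x t) := by
  have hx : ∀ u : ℝ, Commute (1 + u • x) x := fun u =>
    (Commute.one_left x).add_left ((Commute.refl x).smul_left u)
  have hJ : ∀ y, (∀ u : ℝ, Commute y (1 + u • x)⁻¹ʳ) → ∀ s,
      Commute y (∫ u in (0:ℝ)..s, (1 + u • x)⁻¹ʳ) :=
    fun y hy s => Commute.intervalIntegral_right hy 0 s
  have hxJ := hJ x fun u => (hx u).symm.ringInverse_right
  have hJJ := hJ _ fun u => (hJ _ (fun v =>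
    ((Commute.one_right _).add_right ((hx u).smul_right v)).ringInverse_ringInverse) s).symm
  exact ((Commute.refl x).mul_left (hxJ s).symm).mul_right ((hxJ t).mul_left (hJJ t))

theorem hasDerivAt_segmentLog {t : ℝ} (hx : uIcc 0 t ⊆ {u : ℝ | IsUnit (1 + u • x)}) :
    HasDerivAt (segmentLog x) (x * (1 + t • x)⁻¹ʳ) t := by
  have hopen := isOpen_setOf_isUnit_one_add_smul x
  have hcont := continuousOn_inverse_one_add_smul x
  have ht : t ∈ {u : ℝ | IsUnit (1 + u • x)} := hx right_mem_uIcc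
  exact (intervalIntegral.integral_hasDerivAt_right (hcont.mono hx).intervalIntegrable
    (hcont.stronglyMeasurableAtFilter hopen t ht)
    (hcont.continuousAt (hopen.mem_nhds ht))).const_mul x

theorem exp_neg_segmentLog_mul (hx : ∀ u ∈ Icc (0:ℝ) 1, IsUnit (1 + u • x)) {t : ℝ}
    (ht : t ∈ Icc (0:ℝ) 1) : exp (-segmentLog x t) * (1 + t • x) = 1 := by
  have hderiv : ∀ τ ∈ Icc (0:ℝ) 1,
      HasDerivAt (fun s => exp (-segmentLog x s) * (1 + s • x)) 0 τ := by
    intro τ hτ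
    have hL := hasDerivAt_segmentLog x fun u hu =>
      hx u (Icc_subset_Icc_right hτ.2 (uIcc_of_le hτ.1 ▸ hu))
    have hexp := hasDerivAt_exp_of_commute hL.neg fun s =>
      (commute_segmentLog x τ s).neg_left.neg_right
    have hlin : HasDerivAt (fun s : ℝ => 1 + s • x) x τ := by
      simpa using ((hasDerivAt_id τ).smul_const x).const_add 1
    refine (hexp.mul hlin).congr_deriv ?_
    rw [mul_assoc, neg_mul, mul_assoc, Ring.inverse_mul_cancel _ (hx τ hτ), mul_one, mul_neg,
      neg_add_cancel]
  have hconst := constant_of_has_deriv_right_zero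
    (fun τ hτ => (hderiv τ hτ).continuousAt.continuousWithinAt)
    (fun τ hτ => (hderiv τ (Ico_subset_Icc_self hτ)).hasDerivWithinAt) t ht
  simpa [segmentLog] using hconst

theorem exp_segmentLog_one (hx : ∀ u ∈ Icc (0:ℝ) 1, IsUnit (1 + u • x)) :
    exp (segmentLog x 1) = 1 + x := by
  let _ : NormedAlgebra ℚ 𝔸 := NormedAlgebra.restrictScalars ℚ ℝ 𝔸
  have h := exp_neg_segmentLog_mul x hx (right_mem_Icc.2 zero_le_one)
  rw [one_smul] at h
  calc exp (segmentLog x 1) = exp (segmentLog x 1) * (exp (-segmentLog x 1) * (1 + x)) := by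
        rw [h, mul_one]
    _ = 1 + x := by
        rw [← mul_assoc, ← exp_add_of_commute (Commute.refl _).neg_right, add_neg_cancel, exp_zero,
          one_mul]

end Segment

end BanachAlgebra

section ChangeOfVariables

theorem image_inv_one_add_Ici : (fun μ : ℝ => (1 + μ)⁻¹) '' Ici 0 = Ioc 0 1 := by
  ext u
  constructor
  · rintro ⟨μ, hμ, rfl⟩
    rw [mem_Ici] at hμ
    exact ⟨by positivity, inv_le_one_of_one_le₀ (by linarith)⟩
  · rintro ⟨hu0, hu1⟩
    refine ⟨u⁻¹ - 1, ?_, by simp⟩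
    simpa using (one_le_inv₀ hu0).2 hu1

theorem injOn_inv_one_add : InjOn (fun μ : ℝ => (1 + μ)⁻¹) (Ici 0) :=
  fun μ _ ν _ h => by simpa using h

theorem hasDerivAt_inv_one_add {μ : ℝ} (hμ : 0 ≤ μ) :
    HasDerivAt (fun μ : ℝ => (1 + μ)⁻¹) (-((1 + μ) ^ 2)⁻¹) μ := by
  refine (((hasDerivAt_id' μ).const_add 1).inv (by positivity)).congr_deriv ?_
  rw [neg_div, one_div]

variable {E : Type*} [NormedAddCommGroup E] [NormedSpace ℝ E]

theorem integrableOn_Ici_comp_inv_one_add_iff (f : ℝ → E) :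
    IntegrableOn (fun μ : ℝ => ((1 + μ) ^ 2)⁻¹ • f (1 + μ)⁻¹) (Ici 0) ↔
      IntegrableOn f (Ioc 0 1) := by
  rw [← image_inv_one_add_Ici, integrableOn_image_iff_integrableOn_abs_deriv_smul measurableSet_Ici
    (fun μ hμ => (hasDerivAt_inv_one_add hμ).hasDerivWithinAt) injOn_inv_one_add]
  refine integrableOn_congr_fun (fun μ (hμ : 0 ≤ μ) => ?_) measurableSet_Ici
  simp [abs_of_pos (by positivity : (0:ℝ) < ((1 + μ) ^ 2)⁻¹)]

theorem integral_Ici_comp_inv_one_add (f : ℝ → E) :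
    ∫ μ in Ici (0:ℝ), ((1 + μ) ^ 2)⁻¹ • f (1 + μ)⁻¹ = ∫ u in Ioc 0 1, f u := by
  rw [← image_inv_one_add_Ici, integral_image_eq_integral_abs_deriv_smul measurableSet_Ici
    (fun μ hμ => (hasDerivAt_inv_one_add hμ).hasDerivWithinAt) injOn_inv_one_add]
  refine setIntegral_congr_fun measurableSet_Ici (fun μ (hμ : 0 ≤ μ) => ?_)
  simp [abs_of_pos (by positivity : (0:ℝ) < ((1 + μ) ^ 2)⁻¹)]

end ChangeOfVariables

section LogIntegrand

noncomputable def logIntegrand {𝔸 : Type*} [Ring 𝔸] [Algebra ℝ 𝔸] (a : 𝔸) (μ : ℝ) : 𝔸 :=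
  (1 + μ)⁻¹ • (μ • 1 + a)⁻¹ʳ

section Algebra

variable {𝔸 : Type*} [Ring 𝔸] [Algebra ℝ 𝔸]

theorem logIntegrand_eq (a : 𝔸) {μ : ℝ} (hμ : 0 ≤ μ) :
    logIntegrand a μ = ((1 + μ) ^ 2)⁻¹ • (1 + (1 + μ)⁻¹ • (a - 1))⁻¹ʳ := by
  have h0 : 1 + μ ≠ 0 := by positivity
  have hscale : μ • (1 : 𝔸) + a = (1 + μ) • (1 + (1 + μ)⁻¹ • (a - 1)) := by
    rw [smul_add, smul_smul, mul_inv_cancel₀ h0, one_smul]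
    module
  rw [logIntegrand, hscale, Ring.inverse_smul h0, smul_smul, ← mul_inv, sq]

theorem isUnit_one_add_smul_sub_one {a : 𝔸} (ha : ∀ μ : ℝ, 0 ≤ μ → IsUnit (μ • 1 + a)) :
    ∀ u ∈ Icc (0:ℝ) 1, IsUnit (1 + u • (a - 1)) := by
  rintro u ⟨hu0, hu1⟩
  rcases hu0.eq_or_lt with rfl | hpos
  · simp
  · have hscale : 1 + u • (a - 1) = u • ((u⁻¹ - 1) • 1 + a) := by
      rw [smul_add, smul_smul, mul_sub, mul_inv_cancel₀ hpos.ne', mul_one]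
      module
    rw [hscale]
    exact (isUnit_smul_iff (Units.mk0 u hpos.ne') _).2
      (ha _ (sub_nonneg.2 ((one_le_inv₀ hpos).2 hu1)))

end Algebra

theorem integral_logIntegrand {𝔸 : Type*} [NormedRing 𝔸] [NormedAlgebra ℝ 𝔸] (a : 𝔸) :
    ∫ μ in Ici 0, logIntegrand a μ = ∫ u in (0:ℝ)..1, (1 + u • (a - 1))⁻¹ʳ := by
  rw [setIntegral_congr_fun measurableSet_Ici (fun μ hμ => logIntegrand_eq a hμ),
    integral_Ici_comp_inv_one_add (fun u : ℝ => (1 + u • (a - 1))⁻¹ʳ),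
    intervalIntegral.integral_of_le zero_le_one]

variable {𝔸 : Type*} [NormedRing 𝔸] [NormedAlgebra ℝ 𝔸] [CompleteSpace 𝔸] {a : 𝔸}

theorem integrableOn_logIntegrand (ha : ∀ μ : ℝ, 0 ≤ μ → IsUnit (μ • 1 + a)) :
    IntegrableOn (logIntegrand a) (Ici 0) := by
  have hcont : ContinuousOn (fun u : ℝ => (1 + u • (a - 1))⁻¹ʳ) (Icc 0 1) :=
    (continuousOn_inverse_one_add_smul _).mono (isUnit_one_add_smul_sub_one ha)
  refine (integrableOn_congr_fun (fun μ hμ => logIntegrand_eq a hμ) measurableSet_Ici).2 ?_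
  exact (integrableOn_Ici_comp_inv_one_add_iff (fun u : ℝ => (1 + u • (a - 1))⁻¹ʳ)).2
    (hcont.integrableOn_Icc.mono_set Ioc_subset_Icc_self)

theorem exp_sub_one_mul_integral_logIntegrand (ha : ∀ μ : ℝ, 0 ≤ μ → IsUnit (μ • 1 + a)) :
    exp ((a - 1) * ∫ μ in Ici 0, logIntegrand a μ) = a := by
  rw [integral_logIntegrand]
  exact (exp_segmentLog_one _ (isUnit_one_add_smul_sub_one ha)).trans (add_sub_cancel 1 a)

end LogIntegrand

section EuclideanCLM

variable {n : Type*} [Fintype n] [DecidableEq n]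

theorem Matrix.continuous_toEuclideanCLM_symm :
    Continuous (Matrix.toEuclideanCLM (𝕜 := ℂ) (n := n)).symm :=
  (Matrix.toEuclideanCLM (𝕜 := ℂ) (n := n)).symm.toAlgEquiv.toLinearEquiv
    |>.toContinuousLinearEquiv.continuous

/- The continuous linear equivalences below are built with the topology of the sup norm: it agrees
with `instTopologicalSpaceMatrix` only after unfolding instances. -/

theorem Matrix.integrableOn_toEuclideanCLM_comp_iff {f : ℝ → Matrix n n ℂ} {s : Set ℝ} :
    IntegrableOn (fun μ => Matrix.toEuclideanCLM (𝕜 := ℂ) (f μ)) s ↔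
      @IntegrableOn _ _ _ _ SeminormedAddGroup.toContinuousENorm f s volume := by
  let _ : TopologicalSpace (Matrix n n ℂ) := PseudoMetricSpace.toUniformSpace.toTopologicalSpace
  let e := (Matrix.toEuclideanCLM (𝕜 := ℂ) (n := n)).toAlgEquiv.toLinearEquiv
  exact e.toContinuousLinearEquiv.integrable_comp_iff

theorem Matrix.toEuclideanCLM_setIntegral (f : ℝ → Matrix n n ℂ) (s : Set ℝ) :
    Matrix.toEuclideanCLM (𝕜 := ℂ) (∫ μ in s, f μ) =
      ∫ μ in s, Matrix.toEuclideanCLM (𝕜 := ℂ) (f μ) := by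
  let _ : TopologicalSpace (Matrix n n ℂ) := PseudoMetricSpace.toUniformSpace.toTopologicalSpace
  let e := (Matrix.toEuclideanCLM (𝕜 := ℂ) (n := n)).toAlgEquiv.toLinearEquiv
  exact (e.toContinuousLinearEquiv.integral_comp_comm f).symm

end EuclideanCLM

theorem magnus_stmt0_general {n : Type*} [Fintype n] [DecidableEq n] (Φ : Matrix n n ℂ)
    (hspec : ∀ x : ℝ, x ≤ 0 → (x : ℂ) ∉ spectrum ℂ Φ) :
    @MeasureTheory.IntegrableOn _ _ _ _ SeminormedAddGroup.toContinuousENorm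
      (fun μ : ℝ => (1 / (1 + (μ : ℂ))) • ((μ : ℂ) • (1 : Matrix n n ℂ) + Φ)⁻¹)
      (Set.Ici 0) MeasureTheory.volume ∧
    NormedSpace.exp
      ((Φ - 1) *
        ∫ μ : ℝ in Set.Ici 0,
          (1 / (1 + (μ : ℂ))) • ((μ : ℂ) • (1 : Matrix n n ℂ) + Φ)⁻¹) = Φ := by
  set φ := Matrix.toEuclideanCLM (𝕜 := ℂ) (n := n) with hφ
  have hunit : ∀ μ : ℝ, 0 ≤ μ → IsUnit ((μ : ℂ) • 1 + φ Φ) := by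
    intro μ hμ
    have h := (spectrum.notMem_iff.mp (hspec (-μ) (by linarith))).neg.map φ
    rw [Algebra.algebraMap_eq_smul_one, neg_sub, map_sub, map_smul, map_one] at h
    convert h using 1
    push_cast
    module
  have hg : ∀ μ : ℝ, φ ((1 / (1 + (μ : ℂ))) • ((μ : ℂ) • (1 : Matrix n n ℂ) + Φ)⁻¹) =
      logIntegrand (φ Φ) μ := by
    intro μ
    -- the real scalar action in `logIntegrand` is, by definition, the action of `(r : ℂ)`
    show _ = (((1 + μ)⁻¹ : ℝ) : ℂ) • ((μ : ℂ) • 1 + φ Φ)⁻¹ʳ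
    rw [map_smul, Matrix.nonsing_inv_eq_ringInverse, map_ringInverse, map_add, map_smul, map_one]
    push_cast
    rw [one_div]
  refine ⟨Matrix.integrableOn_toEuclideanCLM_comp_iff.1 ?_, ?_⟩
  · simp only [← hφ, hg]
    exact integrableOn_logIntegrand hunit
  · rw [← φ.symm_apply_apply ((Φ - 1 : Matrix n n ℂ) * _), map_mul, map_sub, map_one,
      Matrix.toEuclideanCLM_setIntegral, ← hφ, integral_congr_ae (Eventually.of_forall hg),
      ← map_exp_of_continuous φ.symm Matrix.continuous_toEuclideanCLM_symm,
      exp_sub_one_mul_integral_logIntegrand hunit, φ.symm_apply_apply]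

/-- **Lemma 1 (existence of the integral formula for the logarithm).**
If the invertible complex matrix `Φ` has no eigenvalue in `(-∞, 0]`, then the improper
integral `(Φ - I) ∫₀^∞ (1/(1+μ)) (μI + Φ)⁻¹ dμ` converges and is a logarithm of `Φ`. -/
theorem magnus_stmt0 {n : Type*} [Fintype n] [DecidableEq n] (Φ : Matrix n n ℂ)
    (hΦ : IsUnit Φ)
    (hspec : ∀ x : ℝ, x ≤ 0 → (x : ℂ) ∉ spectrum ℂ Φ) :
    @MeasureTheory.IntegrableOn _ _ _ _ SeminormedAddGroup.toContinuousENorm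
      (fun μ : ℝ => (1 / (1 + (μ : ℂ))) • ((μ : ℂ) • (1 : Matrix n n ℂ) + Φ)⁻¹)
      (Set.Ici 0) MeasureTheory.volume ∧
    NormedSpace.exp
      ((Φ - 1) *
        ∫ μ : ℝ in Set.Ici 0,
          (1 / (1 + (μ : ℂ))) • ((μ : ℂ) • (1 : Matrix n n ℂ) + Φ)⁻¹) = Φ :=
  magnus_stmt0_general Φ hspec
end

section
/- Let Φ be an invertible n×n real matrix such that Φ, viewed as a complex matrix, has no eigenvalue in the interval (-∞,0]. Then Φ has a real logarithm: there exists a real n×n matrix B with exp(B) = Φ. -/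
/-!
For real `x`, `x` lies in the spectrum of the complexification of `Φ` iff it lies in the real
spectrum of `Φ`, so no `x ≤ 0` is in the latter. Hence the segment `1 + t • (Φ - 1)`,
`t ∈ [0, 1]`, consists of invertible matrices: for `t > 0` it is `-t` times
`(t - 1) / t - Φ`. These matrices lie in the commutative, finite-dimensional (hence complete)
algebra `ℝ[Φ]`, and they are still invertible there. In a commutative Banach algebra, with
`c t = 1 + t • (Φ - 1)` and `B t = ∫₀ᵗ c' s * (c s)⁻¹ ds`, the function `exp (-B t) * c t` has
zero derivative, so `exp (B 1) = c 1 = Φ`.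
-/

open NormedSpace Set

theorem Subalgebra.isUnit_of_isUnit_val_of_finiteDimensional {K A : Type*} [Field K] [Ring A]
    [Algebra K A] {S : Subalgebra K A} [FiniteDimensional K S] {x : S} (hx : IsUnit (x : A)) :
    IsUnit x :=
  haveI : IsArtinianRing S := isArtinian_of_tower K inferInstance
  IsArtinianRing.isUnit_of_mem_nonZeroDivisors <|
    comap_nonZeroDivisors_le_of_injective (f := S.val) Subtype.val_injective hx.mem_nonZeroDivisors

theorem isUnit_one_add_smul_sub_one_s1 {A : Type*} [Ring A] [Algebra ℝ A] {a : A}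
    (ha : ∀ x : ℝ, x ≤ 0 → x ∉ spectrum ℝ a) {t : ℝ} (ht : t ∈ Icc (0 : ℝ) 1) :
    IsUnit (1 + t • (a - 1)) := by
  obtain rfl | ht₀ := ht.1.eq_or_lt
  · simp
  have hx : (t - 1) / t ≤ 0 := div_nonpos_of_nonpos_of_nonneg (by linarith [ht.2]) ht.1
  have h : 1 + t • (a - 1) = algebraMap ℝ A (-t) * (algebraMap ℝ A ((t - 1) / t) - a) := by
    have hcoef : -t * ((t - 1) / t) = 1 - t := by field_simp; ring
    rw [← Algebra.smul_def, Algebra.algebraMap_eq_smul_one, smul_sub (-t), smul_smul, hcoef]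
    module
  rw [h]
  exact ((isUnit_iff_ne_zero.mpr (neg_ne_zero.mpr ht₀.ne')).map _).mul
    (spectrum.notMem_iff.mp (ha _ hx))

theorem Matrix.spectrum_eq_preimage_spectrum_map {n K L : Type*} [Fintype n] [DecidableEq n]
    [Field K] [Field L] [Algebra K L] (M : Matrix n n K) :
    spectrum K M = algebraMap K L ⁻¹' spectrum L (M.map (algebraMap K L)) := by
  ext x
  have h : algebraMap L (Matrix n n L) (algebraMap K L x) - M.map (algebraMap K L)
      = (algebraMap K L).mapMatrix (algebraMap K (Matrix n n K) x - M) := by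
    simp [Matrix.map_sub, Matrix.algebraMap_eq_diagonal]
  simp only [Set.mem_preimage, spectrum.mem_iff, h, Matrix.isUnit_iff_isUnit_det,
    ← RingHom.map_det, isUnit_iff_ne_zero, map_ne_zero]

section CommBanachAlgebra

variable {A : Type*} [NormedCommRing A] [NormedAlgebra ℝ A] [CompleteSpace A]

theorem HasDerivAt.normedSpace_exp {B : ℝ → A} {b : A} {t : ℝ} (hB : HasDerivAt B b t) :
    HasDerivAt (fun s => NormedSpace.exp (B s)) (NormedSpace.exp (B t) * b) t := by
  simpa [Function.comp_def] using (hasFDerivAt_exp (𝕂 := ℝ) (x := B t)).comp_hasDerivAt t hB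

theorem eq_exp_sub_mul_of_hasDerivAt {B c B' c' : ℝ → A} {a b : ℝ} (hab : a ≤ b)
    (hB : ∀ t ∈ Icc a b, HasDerivAt B (B' t) t) (hc : ∀ t ∈ Icc a b, HasDerivAt c (c' t) t)
    (hc' : ∀ t ∈ Icc a b, c' t = B' t * c t) :
    c b = exp (B b - B a) * c a := by
  have exp_add (x y : A) : exp (x + y) = exp x * exp y :=
    exp_add_of_mem_ball (𝕂 := ℝ) (by simp [expSeries_radius_eq_top])
      (by simp [expSeries_radius_eq_top])
  have hderiv : ∀ t ∈ Icc a b, HasDerivAt (fun s => exp (-B s) * c s) 0 t := by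
    intro t ht
    convert (hB t ht).fun_neg.normedSpace_exp.fun_mul (hc t ht) using 1
    rw [hc' t ht]
    ring
  have hconst : exp (-B b) * c b = exp (-B a) * c a :=
    constant_of_has_deriv_right_zero (fun t ht => (hderiv t ht).continuousAt.continuousWithinAt)
      (fun t ht => (hderiv t (Ico_subset_Icc_self ht)).hasDerivWithinAt) b (right_mem_Icc.2 hab)
  calc c b = exp (B b) * (exp (-B b) * c b) := by
        rw [← mul_assoc, ← exp_add, add_neg_cancel, exp_zero, one_mul]
    _ = exp (B b - B a) * c a := by
        rw [hconst, ← mul_assoc, ← exp_add, sub_eq_add_neg]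

theorem exists_exp_eq_of_isUnit_segment {a : A}
    (h : ∀ t ∈ Icc (0 : ℝ) 1, IsUnit (1 + t • (a - 1))) : ∃ b, exp b = a := by
  set c : ℝ → A := fun t => 1 + t • (a - 1)
  set U : Set ℝ := {t | IsUnit (c t)}
  have hU : IsOpen U := Units.isOpen.preimage (by fun_prop)
  set f : ℝ → A := fun t => (a - 1) * Ring.inverse (c t)
  have hf : ContinuousOn f U := fun t ht =>
    (continuousAt_const.mul ((NormedRing.inverse_continuousAt ht.unit).comp
      (f := c) (by fun_prop))).continuousWithinAt
  have hB : ∀ t ∈ Icc (0 : ℝ) 1, HasDerivAt (fun u => ∫ s in (0 : ℝ)..u, f s) (f t) t := by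
    intro t ht
    refine intervalIntegral.integral_hasDerivAt_right ?_
      (hf.stronglyMeasurableAtFilter hU t (h t ht)) (hf.continuousAt (hU.mem_nhds (h t ht)))
    refine (hf.mono fun s hs => h s ?_).intervalIntegrable
    rw [uIcc_of_le ht.1] at hs
    exact ⟨hs.1, hs.2.trans ht.2⟩
  have hc (t : ℝ) : HasDerivAt c (a - 1) t := by
    simpa only [one_smul] using ((hasDerivAt_id' t).smul_const (a - 1)).const_add 1
  refine ⟨∫ s in (0 : ℝ)..1, f s, ?_⟩
  have := eq_exp_sub_mul_of_hasDerivAt zero_le_one hB (fun t _ => hc t) fun t ht => by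
    rw [mul_assoc, Ring.inverse_mul_cancel _ (h t ht), mul_one]
  simpa [c] using this.symm

end CommBanachAlgebra

theorem exists_exp_eq_of_forall_nonpos_notMem_spectrum {A : Type*} [NormedRing A]
    [NormedAlgebra ℝ A] [FiniteDimensional ℝ A] {a : A}
    (ha : ∀ x : ℝ, x ≤ 0 → x ∉ spectrum ℝ a) : ∃ b, exp b = a := by
  let S := Algebra.adjoin ℝ {a}
  let : NormedCommRing S := { (inferInstance : NormedRing S) with mul_comm := mul_comm' }
  have : CompleteSpace S := FiniteDimensional.complete ℝ S
  obtain ⟨b, hb⟩ := exists_exp_eq_of_isUnit_segment (A := S)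
    (a := ⟨a, Algebra.self_mem_adjoin_singleton ℝ a⟩) fun t ht =>
      Subalgebra.isUnit_of_isUnit_val_of_finiteDimensional (isUnit_one_add_smul_sub_one_s1 ha ht)
  have hmap := map_exp_of_mem_ball (𝕂 := ℝ) S.val continuous_subtype_val b
    (by simp [expSeries_radius_eq_top])
  rw [hb] at hmap
  exact ⟨b, hmap.symm⟩

theorem magnus_stmt1_general {n : Type*} [Fintype n] [DecidableEq n] (Φ : Matrix n n ℝ)
    (hspec : ∀ x : ℝ, x ≤ 0 → (x : ℂ) ∉ spectrum ℂ (Φ.map Complex.ofReal)) :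
    ∃ B : Matrix n n ℝ, NormedSpace.exp B = Φ := by
  let : NormedRing (Matrix n n ℝ) := Matrix.linftyOpNormedRing
  let : NormedAlgebra ℝ (Matrix n n ℝ) := Matrix.linftyOpNormedAlgebra
  refine exists_exp_eq_of_forall_nonpos_notMem_spectrum fun x hx hmem => hspec x hx ?_
  rwa [Matrix.spectrum_eq_preimage_spectrum_map (L := ℂ)] at hmem

/-- If an invertible real matrix `Φ`, viewed as a complex matrix, has no eigenvalue
in `(-∞, 0]`, then `Φ` has a real logarithm. -/
theorem magnus_stmt1 {n : Type*} [Fintype n] [DecidableEq n] (Φ : Matrix n n ℝ)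
    (hΦ : IsUnit Φ)
    (hspec : ∀ x : ℝ, x ≤ 0 → (x : ℂ) ∉ spectrum ℂ (Φ.map Complex.ofReal)) :
    ∃ B : Matrix n n ℝ, NormedSpace.exp B = Φ :=
  magnus_stmt1_general Φ hspec
end

section
/- Let A : ℝ → Matrix n n ℝ be a continuous real matrix-valued function and let Y : ℝ → Matrix n n ℝ satisfy Y'(s) = A(s) · Y(s) for all s and Y(0) = I. If ∫₀^t ‖A(τ)‖₂ dτ < π, then Y(t) has a real logarithm: there exists a real n×n matrix Ω with exp(Ω) = Y(t). -/
attribute [local instance] Matrix.normedAddCommGroup Matrix.normedSpace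

/-- The spectral norm of a real matrix: the operator norm of the associated linear map
between Euclidean spaces. -/
noncomputable def l2norm {n : Type*} [Fintype n] [DecidableEq n] (A : Matrix n n ℝ) : ℝ :=
  ‖Matrix.toEuclideanCLM (𝕜 := ℝ) A‖

/-!
A real matrix whose spectrum avoids `(-∞, 0]` has a real logarithm: the segment from `1` to `b`
then consists of units, and `ω = ∫₀¹ (b - 1) (1 + u (b - 1))⁻¹ du` satisfies `exp ω = b`, the
computation taking place in the commutative closed subalgebra generated by `b`.

So it suffices that `Y(t)` has no eigenvalue `μ ≤ 0`. For an eigenvector `v`, the solution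
`x(s) = Y(s) v` never vanishes, and its angle with `x(0)` grows at rate at most `‖A(s)‖₂`. That
angle therefore stays below `∫₀ᵗ ‖A(τ)‖₂ dτ < π`, whereas `x(t) = μ x(0)` would make it `π`.
-/

open Set Real NormedSpace
open scoped RealInnerProductSpace

section Logarithm

theorem eq_exp_sub_mul_of_hasDerivAt_s2 {𝔸 : Type*} [NormedCommRing 𝔸] [NormedAlgebra ℝ 𝔸]
    [CompleteSpace 𝔸] {ω ω' p : ℝ → 𝔸} {a b : ℝ} (hab : a ≤ b)
    (hω : ∀ r ∈ Icc a b, HasDerivAt ω (ω' r) r)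
    (hp : ∀ r ∈ Icc a b, HasDerivAt p (ω' r * p r) r) :
    p b = exp (ω b - ω a) * p a := by
  let _ : NormedAlgebra ℚ 𝔸 := NormedAlgebra.restrictScalars ℚ ℝ 𝔸
  set F : ℝ → 𝔸 := fun r => exp (-ω r) * p r
  have hF : ∀ r ∈ Icc a b, HasDerivAt F 0 r := by
    intro r hr
    have hexp : HasDerivAt (fun r => exp (-ω r)) (exp (-ω r) * -ω' r) r := by
      simpa [Function.comp_def, mul_comm] using
        (hasFDerivAt_exp (𝕂 := ℝ)).comp_hasDerivAt r (hω r hr).neg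
    have := hexp.mul (hp r hr)
    rw [mul_neg, neg_mul, ← mul_assoc, neg_add_cancel] at this
    exact this
  have hFab : F b = F a := constant_of_has_deriv_right_zero
    (fun r hr => (hF r hr).continuousAt.continuousWithinAt)
    (fun r hr => (hF r (Ico_subset_Icc_self hr)).hasDerivWithinAt) b ⟨hab, le_rfl⟩
  calc p b = exp (ω b) * F b := by
        rw [← mul_assoc, ← NormedSpace.exp_add, add_neg_cancel, NormedSpace.exp_zero, one_mul]
    _ = exp (ω b - ω a) * p a := by
        rw [hFab, ← mul_assoc, ← NormedSpace.exp_add, sub_eq_add_neg]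

theorem exists_exp_eq_of_forall_isUnit_segment {𝔸 : Type*} [NormedCommRing 𝔸]
    [NormedAlgebra ℝ 𝔸] [CompleteSpace 𝔸] {b : 𝔸}
    (hb : ∀ u ∈ Icc (0 : ℝ) 1, IsUnit (1 + u • (b - 1))) :
    ∃ ω : 𝔸, exp ω = b := by
  set p : ℝ → 𝔸 := fun u => 1 + u • (b - 1)
  set U : Set ℝ := {u | IsUnit (p u)}
  have hU : IsOpen U := Units.isOpen.preimage (by fun_prop)
  set g : ℝ → 𝔸 := fun u => (b - 1) * Ring.inverse (p u)
  have hg : ContinuousOn g U := fun u hu =>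
    (continuousAt_const.mul ((NormedRing.inverse_continuousAt hu.unit).comp (f := p)
      (by fun_prop))).continuousWithinAt
  have hω : ∀ r ∈ Icc (0 : ℝ) 1, HasDerivAt (fun r => ∫ u in (0 : ℝ)..r, g u) (g r) r :=
    fun r hr => intervalIntegral.integral_hasDerivAt_right
      (hg.mono ((uIcc_subset_Icc (left_mem_Icc.2 zero_le_one) hr).trans hb)).intervalIntegrable
      (hg.stronglyMeasurableAtFilter hU r (hb r hr))
      (hg.continuousAt (hU.mem_nhds (hb r hr)))
  have hp : ∀ r ∈ Icc (0 : ℝ) 1, HasDerivAt p (g r * p r) r := by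
    intro r hr
    rw [show g r * p r = b - 1 by
      simp only [g, p, mul_assoc, Ring.inverse_mul_cancel _ (hb r hr), mul_one]]
    simpa [p] using ((hasDerivAt_id r).smul_const (b - 1)).const_add 1
  refine ⟨∫ u in (0 : ℝ)..1, g u, ?_⟩
  simpa [p] using (eq_exp_sub_mul_of_hasDerivAt_s2 zero_le_one hω hp).symm

theorem isUnit_one_add_smul_sub_one_of_nonpos_notMem_spectrum {A : Type*} [Ring A]
    [Algebra ℝ A] {b : A} (hb : ∀ μ ≤ 0, μ ∉ spectrum ℝ b) {u : ℝ} (hu : u ∈ Icc (0 : ℝ) 1) :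
    IsUnit (1 + u • (b - 1)) := by
  rcases hu.1.eq_or_lt with rfl | hu0
  · simp
  have hμ : 1 - u⁻¹ ≤ 0 := sub_nonpos.2 (one_le_inv₀ hu0 |>.2 hu.2)
  have key : 1 + u • (b - 1) = algebraMap ℝ A (-u) * (algebraMap ℝ A (1 - u⁻¹) - b) := by
    simp only [Algebra.algebraMap_eq_smul_one, smul_mul_assoc, one_mul]
    match_scalars
    · field_simp
      ring
    · ring
  rw [key]
  exact ((isUnit_iff_ne_zero.2 (neg_ne_zero.2 hu0.ne')).map _).mul
    (spectrum.notMem_iff.1 (hb _ hμ))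

theorem Subalgebra.isUnit_of_isUnit_coe {K A : Type*} [Field K] [Ring A] [Algebra K A]
    {S : Subalgebra K A} [Module.Finite K S] {x : S} (hx : IsUnit (x : A)) : IsUnit x := by
  have := IsArtinianRing.of_finite K S
  exact IsArtinianRing.isUnit_iff_isRightRegular.2 fun y z h =>
    Subtype.val_injective (hx.isRegular.right (congrArg Subtype.val h))

theorem exists_exp_eq_of_nonpos_notMem_spectrum {𝔸 : Type*} [NormedRing 𝔸]
    [NormedAlgebra ℝ 𝔸] [FiniteDimensional ℝ 𝔸] {b : 𝔸} (hb : ∀ μ ≤ 0, μ ∉ spectrum ℝ b) :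
    ∃ ω : 𝔸, exp ω = b := by
  -- The segment argument needs a commutative algebra; the closed subalgebra generated by `b` is
  -- one, and being finite-dimensional it has the same units as `𝔸`.
  have := FiniteDimensional.complete ℝ 𝔸
  let _ : NormedCommRing (Algebra.elemental ℝ b) :=
    { SubringClass.toNormedRing (Algebra.elemental ℝ b) with mul_comm := mul_comm }
  obtain ⟨ω, hω⟩ := exists_exp_eq_of_forall_isUnit_segment
    (b := (⟨b, Algebra.elemental.self_mem ℝ b⟩ : Algebra.elemental ℝ b)) fun u hu =>
      Subalgebra.isUnit_of_isUnit_coe (isUnit_one_add_smul_sub_one_of_nonpos_notMem_spectrum hb hu)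
  let _ : NormedAlgebra ℚ 𝔸 := NormedAlgebra.restrictScalars ℚ ℝ 𝔸
  let _ : NormedAlgebra ℚ (Algebra.elemental ℝ b) := NormedAlgebra.restrictScalars ℚ ℝ _
  exact ⟨ω, (map_exp (Algebra.elemental ℝ b).val continuous_subtype_val ω).symm.trans
    (congrArg Subtype.val hω)⟩

end Logarithm

section LinearODE

theorem linear_ode_eq_zero_of_eq_zero {F : Type*} [NormedAddCommGroup F] [NormedSpace ℝ F]
    {L : ℝ → F →L[ℝ] F} {x : ℝ → F} {a b : ℝ} (hL : ContinuousOn L (Icc a b))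
    (hx : ∀ s ∈ Icc a b, HasDerivAt x (L s (x s)) s) (hab : a ≤ b) (hb : x b = 0) : x a = 0 := by
  obtain ⟨C, hC⟩ := isCompact_Icc.exists_bound_of_continuousOn hL
  have hlip : ∀ s ∈ Ioc a b, LipschitzOnWith C.toNNReal (L s) univ := fun s hs =>
    ((L s).lipschitz.weaken (by
      rw [← NNReal.coe_le_coe, coe_nnnorm]
      exact (hC s (Ioc_subset_Icc_self hs)).trans (le_max_left _ _))).lipschitzOnWith
  have := ODE_solution_unique_of_mem_Icc_left hlip
    (fun s hs => (hx s hs).continuousAt.continuousWithinAt)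
    (fun s hs => (hx s (Ioc_subset_Icc_self hs)).hasDerivWithinAt) (fun _ _ => mem_univ _)
    continuousOn_const (fun s _ => by simpa using hasDerivWithinAt_const s (Iic s) (0 : F))
    (fun _ _ => mem_univ _) hb (left_mem_Icc.2 hab)
  simpa using this

variable {E : Type*} [NormedAddCommGroup E] [InnerProductSpace ℝ E]

theorem HasDerivAt.norm {x : ℝ → E} {x' : E} {s : ℝ} (hx : HasDerivAt x x' s) (h0 : x s ≠ 0) :
    HasDerivAt (fun s => ‖x s‖) (⟪x s, x'⟫ / ‖x s‖) s := by
  have h := hx.norm_sq.sqrt (by positivity)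
  simp only [Real.sqrt_sq (norm_nonneg _)] at h
  convert h using 1
  field_simp

theorem abs_inner_sub_cos_mul_inner_div_norm_le {w x : E} (v : E) {ψ : ℝ} (hw : ‖w‖ = 1)
    (hx : x ≠ 0) (hwx : ⟪w, x⟫ = cos ψ * ‖x‖) (hψ : 0 ≤ sin ψ) :
    |⟪w, v⟫ - cos ψ * (⟪x, v⟫ / ‖x‖)| ≤ sin ψ * ‖v‖ := by
  have hnx : ‖x‖ ≠ 0 := norm_ne_zero_iff.2 hx
  set z := w - (cos ψ / ‖x‖) • x
  have hzv : ⟪z, v⟫ = ⟪w, v⟫ - cos ψ * (⟪x, v⟫ / ‖x‖) := by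
    simp only [z, inner_sub_left, real_inner_smul_left]
    ring
  have hz : ‖z‖ = sin ψ := by
    refine (sq_eq_sq₀ (norm_nonneg _) hψ).1 ?_
    rw [norm_sub_sq_real, real_inner_smul_right, hwx, norm_smul, Real.norm_eq_abs, hw,
      mul_pow, sq_abs, sin_sq]
    field_simp
    ring
  rw [← hzv, ← hz]
  exact abs_real_inner_le_norm z v

/-- The conclusion says that the angle between `w` and `x s` is at most `ψ s`. -/
theorem cos_mul_norm_le_inner_of_norm_deriv_le {x x' : ℝ → E} {k ψ ψ' : ℝ → ℝ} {a b : ℝ}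
    {w : E} (hw : ‖w‖ = 1) (hx : ∀ s ∈ Icc a b, HasDerivAt x (x' s) s)
    (hx0 : ∀ s ∈ Icc a b, x s ≠ 0) (hx' : ∀ s ∈ Icc a b, ‖x' s‖ ≤ k s * ‖x s‖)
    (hψ : ∀ s ∈ Icc a b, HasDerivAt ψ (ψ' s) s) (hkψ : ∀ s ∈ Icc a b, k s < ψ' s)
    (hψπ : ∀ s ∈ Icc a b, ψ s ∈ Ioo 0 π) (ha : cos (ψ a) * ‖x a‖ ≤ ⟪w, x a⟫) :
    ∀ s ∈ Icc a b, cos (ψ s) * ‖x s‖ ≤ ⟪w, x s⟫ := by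
  have hf : ∀ s ∈ Icc a b, HasDerivAt (fun s => cos (ψ s) * ‖x s‖)
      (-sin (ψ s) * ψ' s * ‖x s‖ + cos (ψ s) * (⟪x s, x' s⟫ / ‖x s‖)) s :=
    fun s hs => ((hψ s hs).cos).mul ((hx s hs).norm (hx0 s hs))
  have hB : ∀ s ∈ Icc a b, HasDerivAt (fun s => ⟪w, x s⟫) ⟪w, x' s⟫ s := fun s hs => by
    simpa using (hasDerivAt_const s w).inner ℝ (hx s hs)
  refine image_le_of_deriv_right_lt_deriv_boundary'
    (fun s hs => (hf s hs).continuousAt.continuousWithinAt)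
    (fun s hs => (hf s (Ico_subset_Icc_self hs)).hasDerivWithinAt) ha
    (fun s hs => (hB s hs).continuousAt.continuousWithinAt)
    (fun s hs => (hB s (Ico_subset_Icc_self hs)).hasDerivWithinAt) ?_
  intro s hs hfB
  replace hs := Ico_subset_Icc_self hs
  have hsin : 0 < sin (ψ s) := sin_pos_of_pos_of_lt_pi (hψπ s hs).1 (hψπ s hs).2
  have hnx : 0 < ‖x s‖ := norm_pos_iff.2 (hx0 s hs)
  have h1 := abs_le.1 (abs_inner_sub_cos_mul_inner_div_norm_le (x' s) hw (hx0 s hs) hfB.symm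
    hsin.le)
  have h2 := mul_le_mul_of_nonneg_left (hx' s hs) hsin.le
  have h3 := mul_pos (mul_pos hsin (sub_pos.2 (hkψ s hs))) hnx
  nlinarith [h1.1]

theorem ne_smul_of_integral_norm_lt_pi {L : ℝ → E →L[ℝ] E} (hL : Continuous L) {x : ℝ → E}
    (hx : ∀ s, HasDerivAt x (L s (x s)) s) (hx0 : x 0 ≠ 0) {t : ℝ} (ht : 0 ≤ t)
    (hint : ∫ τ in (0 : ℝ)..t, ‖L τ‖ < π) {μ : ℝ} (hμ : μ ≤ 0) : x t ≠ μ • x 0 := by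
  intro hxt
  have hne : ∀ s ∈ Icc 0 t, x s ≠ 0 := fun s hs h =>
    hx0 (linear_ode_eq_zero_of_eq_zero hL.continuousOn (fun s _ => hx s) hs.1 h)
  set θ : ℝ → ℝ := fun s => ∫ τ in (0 : ℝ)..s, ‖L τ‖
  have hθ : ∀ s, HasDerivAt θ ‖L s‖ s := fun s =>
    (hL.norm.integral_hasStrictDerivAt 0 s).hasDerivAt
  have hθ0 : ∀ s ∈ Icc 0 t, 0 ≤ θ s := fun s hs =>
    intervalIntegral.integral_nonneg hs.1 fun τ _ => norm_nonneg _
  have hθt : ∀ s ∈ Icc 0 t, θ s ≤ θ t := fun s hs =>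
    intervalIntegral.integral_mono_interval le_rfl hs.1 hs.2
      (Filter.Eventually.of_forall fun τ => norm_nonneg _) (hL.norm.intervalIntegrable 0 t)
  set ε := (π - θ t) / (2 * (1 + t))
  have hε : 0 < ε := div_pos (by linarith) (by linarith)
  have hεt : ε * (1 + t) < π - θ t := by
    rw [div_mul_eq_mul_div, div_lt_iff₀ (by linarith)]
    nlinarith
  -- the slack `ε * (1 + s)` makes the comparison strict and keeps `ψ` off `0`
  set ψ : ℝ → ℝ := fun s => θ s + ε * (1 + s)
  have hψ : ∀ s, HasDerivAt ψ (‖L s‖ + ε) s := fun s => by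
    have := (hθ s).add (((hasDerivAt_id s).const_add 1).const_mul ε)
    rwa [mul_one] at this
  have hψπ : ∀ s ∈ Icc 0 t, ψ s ∈ Ioo 0 π := fun s hs => by
    have := hθ0 s hs
    have := hθt s hs
    constructor <;> nlinarith [hs.1, hs.2]
  set w := ‖x 0‖⁻¹ • x 0
  have hw : ‖w‖ = 1 := by
    rw [norm_smul, norm_inv, norm_norm, inv_mul_cancel₀ (norm_ne_zero_iff.2 hx0)]
  have hwx0 : ⟪w, x 0⟫ = ‖x 0‖ := by
    rw [real_inner_smul_left, real_inner_self_eq_norm_sq]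
    field_simp
  have hcomp := cos_mul_norm_le_inner_of_norm_deriv_le hw
    (fun s _ => hx s) hne (fun s _ => (L s).le_opNorm (x s)) (fun s _ => hψ s)
    (fun s _ => lt_add_of_pos_right _ hε) hψπ
    (by rw [hwx0]; exact mul_le_of_le_one_left (norm_nonneg _) (cos_le_one _)) t ⟨ht, le_rfl⟩
  have hwxt : ⟪w, x t⟫ = -‖x t‖ := by
    rw [hxt, real_inner_smul_right, hwx0, norm_smul, Real.norm_of_nonpos hμ]
    ring
  have hcos : -1 < cos (ψ t) := by
    simpa using cos_lt_cos_of_nonneg_of_le_pi (hψπ t ⟨ht, le_rfl⟩).1.le le_rfl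
      (hψπ t ⟨ht, le_rfl⟩).2
  have := norm_pos_iff.2 (hne t ⟨ht, le_rfl⟩)
  nlinarith

theorem nonpos_notMem_spectrum_of_integral_norm_lt_pi [FiniteDimensional ℝ E]
    {L Φ : ℝ → E →L[ℝ] E} (hL : Continuous L) (hΦ : ∀ s, HasDerivAt Φ (L s * Φ s) s)
    (hΦ0 : Φ 0 = 1) {t : ℝ} (ht : 0 ≤ t) (hint : ∫ τ in (0 : ℝ)..t, ‖L τ‖ < π) {μ : ℝ}
    (hμ : μ ≤ 0) : μ ∉ spectrum ℝ (Φ t) := by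
  intro hspec
  rw [ContinuousLinearMap.spectrum_eq, ← Module.End.hasEigenvalue_iff_mem_spectrum] at hspec
  obtain ⟨v, hv⟩ := hspec.exists_hasEigenvector
  refine ne_smul_of_integral_norm_lt_pi hL (x := fun s => Φ s v) (fun s => ?_)
    (by simpa [hΦ0] using hv.2) ht hint hμ ?_
  · simpa using (hΦ s).clm_apply (hasDerivAt_const s v)
  · simpa [hΦ0] using hv.apply_eq_smul

end LinearODE

/-- **Theorem 2 (existence of a real logarithm).**
If `Y` is the fundamental solution of `Y' = A(t) Y`, `Y(0) = I`, with `A` real and continuous,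
and `∫₀^t ‖A(τ)‖₂ dτ < π`, then `Y(t)` has a real logarithm. -/
theorem magnus_stmt2 {n : Type*} [Fintype n] [DecidableEq n]
    (A : ℝ → Matrix n n ℝ) (hA : Continuous A)
    (Y : ℝ → Matrix n n ℝ)
    (hY : ∀ s : ℝ, HasDerivAt Y (A s * Y s) s) (hY0 : Y 0 = 1)
    (t : ℝ) (ht : 0 < t)
    (hint : (∫ τ in (0:ℝ)..t, l2norm (A τ)) < Real.pi) :
    ∃ Ω : Matrix n n ℝ, NormedSpace.exp Ω = Y t := by
  set e := Matrix.toEuclideanCLM (n := n) (𝕜 := ℝ)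
  set e' := e.toAlgEquiv.toLinearEquiv.toContinuousLinearEquiv
  have hΦ : ∀ s, HasDerivAt (fun s => e (Y s)) (e (A s) * e (Y s)) s := fun s =>
    (e'.hasFDerivAt.comp_hasDerivAt s (hY s)).congr_deriv (map_mul e (A s) (Y s))
  obtain ⟨Ω, hΩ⟩ := exists_exp_eq_of_nonpos_notMem_spectrum fun μ hμ =>
    nonpos_notMem_spectrum_of_integral_norm_lt_pi (e'.continuous.comp hA) hΦ (by simp [hY0])
      ht.le hint hμ
  -- `exp` only depends on the topology, so any normed ring structure on matrices will do here
  let _ : NormedRing (Matrix n n ℝ) := Matrix.linftyOpNormedRing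
  let _ : NormedAlgebra ℚ (EuclideanSpace ℝ n →L[ℝ] EuclideanSpace ℝ n) :=
    NormedAlgebra.restrictScalars ℚ ℝ _
  refine ⟨e.symm Ω, ?_⟩
  calc exp (e.symm Ω) = e.symm (exp Ω) := (map_exp e.symm e'.symm.continuous Ω).symm
    _ = Y t := by rw [hΩ, e.symm_apply_apply]
end

section
/- Let E be a real inner product space, let A : ℝ → (E →L[ℝ] E) and let y : ℝ → E be differentiable with y'(s) = A(s)(y(s)). Fix s with y(s) ≠ 0 and set ŷ(τ) = y(τ)/‖y(τ)‖ (the normalized vector, defined near s). Then ŷ is differentiable at s and ‖ŷ'(s)‖ ≤ ‖A(s)‖, where ‖A(s)‖ is the operator norm of the continuous linear map A(s). -/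
open scoped RealInnerProductSpace

/-!
The derivative of `x ↦ x / ‖x‖` at `x ≠ 0` sends `w` to `‖x‖⁻¹` times the component of `w`
orthogonal to `x`, so it has norm at most `‖w‖ / ‖x‖`. Along a solution of `y' = A y` this
gives `‖ŷ'(s)‖ ≤ ‖A(s) y(s)‖ / ‖y(s)‖ ≤ ‖A(s)‖`.
-/

open NormedSpace

section

variable {E : Type*} [NormedAddCommGroup E] [InnerProductSpace ℝ E]
  {y : ℝ → E} {y' : E} {s : ℝ}

theorem HasDerivAt.norm_of_ne_zero (hy : HasDerivAt y y' s) (hs : y s ≠ 0) :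
    HasDerivAt (fun τ => ‖y τ‖) (⟪y s, y'⟫ / ‖y s‖) s := by
  have hsq : ‖y s‖ ^ 2 ≠ 0 := pow_ne_zero 2 (norm_ne_zero_iff.mpr hs)
  convert hy.norm_sq.sqrt hsq using 1
  · simp only [Real.sqrt_sq (norm_nonneg _)]
  · rw [Real.sqrt_sq (norm_nonneg _)]
    ring

theorem HasDerivAt.normalize (hy : HasDerivAt y y' s) (hs : y s ≠ 0) :
    HasDerivAt (fun τ => normalize (y τ))
      (‖y s‖⁻¹ • (ℝ ∙ y s)ᗮ.starProjection y') s := by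
  have hr : ‖y s‖ ≠ 0 := norm_ne_zero_iff.mpr hs
  convert ((hy.norm_of_ne_zero hs).inv hr).smul hy using 1
  · rfl
  rw [Submodule.starProjection_orthogonal_val, Submodule.starProjection_singleton]
  field_simp
  module

theorem norm_deriv_normalize_le (hy : HasDerivAt y y' s) (hs : y s ≠ 0) :
    ‖deriv (fun τ => normalize (y τ)) s‖ ≤ ‖y'‖ / ‖y s‖ := by
  rw [(hy.normalize hs).deriv, norm_smul, norm_inv, norm_norm, inv_mul_eq_div]
  gcongr
  exact Submodule.norm_starProjection_apply_le _ _

end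

/-- If `y' = A(s) y` with `A(s)` a continuous linear map on a real inner product space,
and `y(s) ≠ 0`, then the normalized vector `ŷ(τ) = y(τ)/‖y(τ)‖` is differentiable at `s`
and `‖ŷ'(s)‖ ≤ ‖A(s)‖`. -/
theorem magnus_stmt4 {E : Type*} [NormedAddCommGroup E] [InnerProductSpace ℝ E]
    (A : ℝ → (E →L[ℝ] E)) (y : ℝ → E)
    (hy : ∀ s : ℝ, HasDerivAt y (A s (y s)) s)
    (s : ℝ) (hs : y s ≠ 0) :
    DifferentiableAt ℝ (fun τ => ‖y τ‖⁻¹ • y τ) s ∧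
      ‖deriv (fun τ => ‖y τ‖⁻¹ • y τ) s‖ ≤ ‖A s‖ :=
  ⟨((hy s).normalize hs).differentiableAt,
    (norm_deriv_normalize_le (hy s) hs).trans ((A s).ratio_le_opNorm (y s))⟩
end

section
/- Let E be a real inner product space, let t > 0, and let ŷ : ℝ → E be continuously differentiable with ‖ŷ(s)‖ = 1 for all s ∈ [0, t]. If the length of the curve, ∫₀^t ‖ŷ'(s)‖ ds, is strictly less than π, then ŷ(t) ≠ -ŷ(0); that is, the endpoint of the curve on the unit sphere is not the antipode of its starting point. -/
open Real Set Filter Topology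
open scoped RealInnerProductSpace

/-! Follow the angle `θ s = arccos ⟪ŷ s, ŷ 0⟫` to the starting point. Since `‖ŷ‖ = 1`, the velocity
`ŷ'` is orthogonal to `ŷ`, so it only sees the component of `ŷ 0` orthogonal to `ŷ s`, whose norm
is `sin θ`; Cauchy–Schwarz then gives `|θ'| ≤ ‖ŷ'‖` wherever `0 < θ < π`. On a subinterval along
which `θ` climbs from `0` to `π` without touching either value in between, integrating this bound
shows that the length is at least `π`. -/

theorem ContinuousOn.exists_Ioo_crossing {g : ℝ → ℝ} {p q c d : ℝ} (hg : ContinuousOn g (Icc p q))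
    (hpq : p ≤ q) (hp : g p = c) (hq : g q = d) (hcd : c ≠ d) :
    ∃ a b, p ≤ a ∧ a < b ∧ b ≤ q ∧ g a = c ∧ g b = d ∧ ∀ x ∈ Ioo a b, g x ≠ c ∧ g x ≠ d := by
  -- `b` is the first time `g` hits `d`, and `a` the last time before `b` at which it equals `c`.
  set B := Icc p q ∩ g ⁻¹' {d}
  have hB : sInf B ∈ B :=
    (hg.preimage_isClosed_of_isClosed isClosed_Icc isClosed_singleton).csInf_mem
      ⟨q, ⟨hpq, le_rfl⟩, hq⟩ ⟨p, fun x hx => hx.1.1⟩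
  set b := sInf B
  set A := Icc p b ∩ g ⁻¹' {c}
  have hA : sSup A ∈ A := ((hg.mono (Icc_subset_Icc_right hB.1.2)).preimage_isClosed_of_isClosed
    isClosed_Icc isClosed_singleton).csSup_mem ⟨p, ⟨le_rfl, hB.1.1⟩, hp⟩ ⟨b, fun x hx => hx.1.2⟩
  have hab : sSup A < b := hA.1.2.lt_of_ne fun h => hcd (hA.2.symm.trans (h ▸ hB.2))
  refine ⟨sSup A, b, hA.1.1, hab, hB.1.2, hA.2, hB.2, fun x hx => ⟨fun hxc => ?_, fun hxd => ?_⟩⟩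
  · exact hx.1.not_ge (le_csSup ⟨b, fun x hx => hx.1.2⟩ ⟨⟨hA.1.1.trans hx.1.le, hx.2.le⟩, hxc⟩)
  · exact hx.2.not_ge (csInf_le ⟨p, fun x hx => hx.1.1⟩
      ⟨⟨hA.1.1.trans hx.1.le, hx.2.le.trans hB.1.2⟩, hxd⟩)

section InnerProductSpace

variable {E : Type*} [NormedAddCommGroup E] [InnerProductSpace ℝ E]

theorem HasDerivAt.inner_self_eq_zero_of_norm_eventuallyEq {f : ℝ → E} {f' : E} {x c : ℝ}
    (hf : HasDerivAt f f' x) (hc : ∀ᶠ y in 𝓝 x, ‖f y‖ = c) : ⟪f x, f'⟫ = 0 := by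
  have hconst : HasDerivAt (‖f ·‖ ^ 2) 0 x :=
    (hasDerivAt_const x (c ^ 2)).congr_of_eventuallyEq (hc.mono fun y hy => by simp [hy])
  simpa using hf.norm_sq.unique hconst

theorem abs_inner_le_norm_mul_sqrt_of_inner_eq_zero {x v u : E} (hx : ‖x‖ = 1)
    (hv : ⟪x, v⟫ = 0) : |⟪v, u⟫| ≤ ‖v‖ * √(‖u‖ ^ 2 - ⟪x, u⟫ ^ 2) := by
  have hproj : ⟪v, u⟫ = ⟪v, u - ⟪x, u⟫ • x⟫ := by
    rw [inner_sub_right, inner_smul_right, real_inner_comm x v, hv, mul_zero, sub_zero]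
  have hnorm : ‖u - ⟪x, u⟫ • x‖ ^ 2 = ‖u‖ ^ 2 - ⟪x, u⟫ ^ 2 := by
    rw [norm_sub_sq_real, inner_smul_right, norm_smul, mul_pow, hx, Real.norm_eq_abs, sq_abs,
      real_inner_comm u x]
    ring
  rw [hproj, ← hnorm, Real.sqrt_sq (norm_nonneg _)]
  exact abs_real_inner_le_norm _ _

theorem neg_one_div_sqrt_mul_inner_le_norm {x v u : E} (hx : ‖x‖ = 1) (hu : ‖u‖ = 1)
    (hv : ⟪x, v⟫ = 0) (h₁ : ⟪x, u⟫ ≠ 1) (h₂ : ⟪x, u⟫ ≠ -1) :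
    -(1 / √(1 - ⟪x, u⟫ ^ 2)) * ⟪v, u⟫ ≤ ‖v‖ := by
  have hlt : |⟪x, u⟫| < 1 := by
    have hle : |⟪x, u⟫| ≤ 1 := by simpa [hx, hu] using abs_real_inner_le_norm x u
    refine hle.lt_of_ne fun h => ?_
    rcases (abs_eq zero_le_one).1 h with h | h
    exacts [h₁ h, h₂ h]
  have hpos : 0 < √(1 - ⟪x, u⟫ ^ 2) := Real.sqrt_pos.2 (by nlinarith [abs_lt.1 hlt])
  have hbound := abs_inner_le_norm_mul_sqrt_of_inner_eq_zero (u := u) hx hv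
  rw [hu, one_pow] at hbound
  calc -(1 / √(1 - ⟪x, u⟫ ^ 2)) * ⟪v, u⟫ = -⟪v, u⟫ / √(1 - ⟪x, u⟫ ^ 2) := by ring
    _ ≤ ‖v‖ := (div_le_iff₀ hpos).2 ((neg_le_abs _).trans hbound)

theorem pi_le_integral_norm_deriv_of_eq_neg {y : ℝ → E} (hy : ContDiff ℝ 1 y) {p q : ℝ}
    (hpq : p ≤ q) (hunit : ∀ s ∈ Icc p q, ‖y s‖ = 1) (hanti : y q = -y p) :
    π ≤ ∫ s in p..q, ‖deriv y s‖ := by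
  have hdiff : Differentiable ℝ y := hy.differentiable one_ne_zero
  set u := y p
  have hu : ‖u‖ = 1 := hunit p ⟨le_rfl, hpq⟩
  set g : ℝ → ℝ := fun s => ⟪y s, u⟫
  have hg : Continuous g := hdiff.continuous.inner continuous_const
  have hgp : g p = 1 := by simp [g, u, hu]
  have hgq : g q = -1 := by simp [g, u, hanti, hu]
  obtain ⟨a, b, hpa, hab, hbq, hga, hgb, hcross⟩ :=
    hg.continuousOn.exists_Ioo_crossing hpq hgp hgq (by norm_num)
  have hsub : Ioo a b ⊆ Ioo p q := Ioo_subset_Ioo hpa hbq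
  set θ' : ℝ → ℝ := fun s => -(1 / √(1 - g s ^ 2)) * ⟪deriv y s, u⟫
  have hθ : ∀ s ∈ Ioo a b, HasDerivAt (fun s => arccos (g s)) (θ' s) s := fun s hs =>
    (hasDerivAt_arccos (hcross s hs).2 (hcross s hs).1).comp s
      (by simpa using (hdiff s).hasDerivAt.inner ℝ (hasDerivAt_const s u))
  have hθ_le : ∀ s ∈ Ioo a b, θ' s ≤ ‖deriv y s‖ := by
    intro s hs
    have hys : ‖y s‖ = 1 := hunit s (Ioo_subset_Icc_self (hsub hs))
    have hperp : ⟪y s, deriv y s⟫ = 0 :=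
      (hdiff s).hasDerivAt.inner_self_eq_zero_of_norm_eventuallyEq
        (eventually_of_mem (Ioo_mem_nhds (hsub hs).1 (hsub hs).2)
          fun r hr => hunit r (Ioo_subset_Icc_self hr))
    exact neg_one_div_sqrt_mul_inner_le_norm hys hu hperp (hcross s hs).1 (hcross s hs).2
  calc π = arccos (g b) - arccos (g a) := by simp [hga, hgb]
    _ ≤ ∫ s in a..b, ‖deriv y s‖ :=
      intervalIntegral.sub_le_integral_of_hasDeriv_right_of_le hab.le
        (continuous_arccos.comp hg).continuousOn (fun s hs => (hθ s hs).hasDerivWithinAt)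
        (hy.continuous_deriv le_rfl).norm.integrableOn_Icc hθ_le
    _ ≤ ∫ s in p..q, ‖deriv y s‖ :=
      intervalIntegral.integral_mono_interval hpa hab.le hbq
        (Eventually.of_forall fun _ => norm_nonneg _)
        ((hy.continuous_deriv le_rfl).norm.intervalIntegrable p q)

end InnerProductSpace

/-- A continuously differentiable curve on the unit sphere of a real inner product space
whose length `∫₀^t ‖ŷ'(s)‖ ds` is less than `π` cannot end at the antipode of its
starting point. -/
theorem magnus_stmt5 {E : Type*} [NormedAddCommGroup E] [InnerProductSpace ℝ E]
    (t : ℝ) (ht : 0 < t) (yhat : ℝ → E) (hC1 : ContDiff ℝ 1 yhat)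
    (hunit : ∀ s ∈ Set.Icc (0:ℝ) t, ‖yhat s‖ = 1)
    (hlen : (∫ s in (0:ℝ)..t, ‖deriv yhat s‖) < Real.pi) :
    yhat t ≠ -yhat 0 := fun hanti =>
  hlen.not_ge (pi_le_integral_norm_deriv_of_eq_neg hC1 ht.le hunit hanti)
end

section
/- Define A : ℝ → Matrix (Fin 2) (Fin 2) ℝ by A(t) = (1/2) · [[sin 2t, -1 - cos 2t], [1 - cos 2t, -sin 2t]], and define Y : ℝ → Matrix (Fin 2) (Fin 2) ℝ by Y(t) = [[t·sin t + cos t, -sin t], [sin t - t·cos t, cos t]]. Then Y(0) = I, Y'(t) = A(t) · Y(t) for all real t, and Y(π) = [[-1, 0], [π, -1]]. -/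
/-!
The double-angle formulas turn `A(t)` into `[[sin t cos t, -cos² t], [sin² t, -sin t cos t]]`;
multiplying out, each entry of `A(t) Y(t)` is the corresponding entry of `Y'(t)` times
`sin² t + cos² t`.
-/

attribute [local instance] Matrix.normedAddCommGroup Matrix.normedSpace

/-- The coefficient matrix of Example 2 (Moan's example). -/
noncomputable def Aex (t : ℝ) : Matrix (Fin 2) (Fin 2) ℝ :=
  (1 / 2 : ℝ) •
    !![Real.sin (2 * t), -1 - Real.cos (2 * t);
       1 - Real.cos (2 * t), -Real.sin (2 * t)]

/-- The fundamental solution of Example 2. -/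
noncomputable def Yex (t : ℝ) : Matrix (Fin 2) (Fin 2) ℝ :=
  !![t * Real.sin t + Real.cos t, -Real.sin t;
     Real.sin t - t * Real.cos t, Real.cos t]

theorem Matrix.hasDerivAt_of_fin_two {𝕜 E : Type*} [NontriviallyNormedField 𝕜]
    [NormedAddCommGroup E] [NormedSpace 𝕜 E] {f₀₀ f₀₁ f₁₀ f₁₁ : 𝕜 → E} {a b c d : E} {t : 𝕜}
    (h₀₀ : HasDerivAt f₀₀ a t) (h₀₁ : HasDerivAt f₀₁ b t)
    (h₁₀ : HasDerivAt f₁₀ c t) (h₁₁ : HasDerivAt f₁₁ d t) :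
    HasDerivAt (fun s => !![f₀₀ s, f₀₁ s; f₁₀ s, f₁₁ s]) !![a, b; c, d] t := by
  refine hasDerivAt_pi.2 fun i => hasDerivAt_pi.2 fun j => ?_
  fin_cases i <;> fin_cases j <;> assumption

theorem hasDerivAt_Yex (t : ℝ) :
    HasDerivAt Yex !![t * Real.cos t, -Real.cos t; t * Real.sin t, -Real.sin t] t := by
  have h₀₀ : HasDerivAt (fun s => s * Real.sin s + Real.cos s) (t * Real.cos t) t :=
    (((hasDerivAt_id' t).mul (Real.hasDerivAt_sin t)).add (Real.hasDerivAt_cos t)).congr_deriv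
      (by ring)
  have h₁₀ : HasDerivAt (fun s => Real.sin s - s * Real.cos s) (t * Real.sin t) t :=
    ((Real.hasDerivAt_sin t).sub ((hasDerivAt_id' t).mul (Real.hasDerivAt_cos t))).congr_deriv
      (by ring)
  exact Matrix.hasDerivAt_of_fin_two h₀₀ (Real.hasDerivAt_sin t).neg h₁₀
    (Real.hasDerivAt_cos t)

theorem Aex_eq_sin_cos (t : ℝ) :
    Aex t = !![Real.sin t * Real.cos t, -Real.cos t ^ 2;
               Real.sin t ^ 2, -(Real.sin t * Real.cos t)] := by
  ext i j
  fin_cases i <;> fin_cases j <;>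
    simp only [Aex, Real.sin_two_mul, Real.cos_two_mul, Fin.mk_one, Fin.zero_eta, Fin.isValue,
      Matrix.smul_apply, Matrix.of_apply, Matrix.cons_val', Matrix.cons_val_zero,
      Matrix.cons_val_one, Matrix.cons_val_fin_one, smul_eq_mul]
  · ring
  · ring
  · linear_combination -Real.sin_sq_add_cos_sq t
  · ring

theorem Aex_mul_Yex (t : ℝ) :
    Aex t * Yex t = !![t * Real.cos t, -Real.cos t; t * Real.sin t, -Real.sin t] := by
  have hsc := Real.sin_sq_add_cos_sq t
  rw [Aex_eq_sin_cos, Yex, Matrix.mul_fin_two]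
  ext i j
  fin_cases i <;> fin_cases j <;>
    simp only [Fin.mk_one, Fin.zero_eta, Fin.isValue, Matrix.of_apply, Matrix.cons_val',
      Matrix.cons_val_zero, Matrix.cons_val_one, Matrix.cons_val_fin_one]
  · linear_combination t * Real.cos t * hsc
  · linear_combination -Real.cos t * hsc
  · linear_combination t * Real.sin t * hsc
  · linear_combination -Real.sin t * hsc

/-- `Y` satisfies `Y(0) = I`, `Y'(t) = A(t) Y(t)` for all `t`, and
`Y(π) = [[-1, 0], [π, -1]]`. -/
theorem magnus_stmt10 :
    Yex 0 = 1 ∧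
    (∀ t : ℝ, HasDerivAt Yex (Aex t * Yex t) t) ∧
    Yex Real.pi = !![(-1 : ℝ), 0; Real.pi, -1] := by
  refine ⟨?_, fun t => Aex_mul_Yex t ▸ hasDerivAt_Yex t, ?_⟩
  · simp [Yex, Matrix.one_fin_two]
  · simp [Yex]
end

section
/- Define A : ℝ → Matrix (Fin 2) (Fin 2) ℝ by A(t) = (1/2) · [[sin 2t, -1 - cos 2t], [1 - cos 2t, -sin 2t]], and let Y : ℝ → Matrix (Fin 2) (Fin 2) ℝ satisfy Y'(t) = A(t) · Y(t) for all t and Y(0) = I. Then Y(π) has no real logarithm: there is no real 2×2 matrix Ω with exp(Ω) = Y(π). (This shows the constant π in the convergence condition ∫₀^t ‖A(τ)‖₂ dτ < π is sharp, since here ∫₀^π ‖A(τ)‖₂ dτ = π.) -/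
/-!
`A(t)` is `A(0) = !![0, -1; 0, 0]` conjugated by the rotation `R(t)` through the angle `t`.
In the rotating frame the equation has the constant nilpotent coefficient `!![0, 0; -1, 0]`,
so `Y(t) = R(t) !![1, 0; -t, 1]` and `Y(π) = !![-1, 0; π, -1]`, a nontrivial Jordan block for
the eigenvalue `-1`. A real logarithm `Ω` of it commutes with it, which forces `Ω 0 1 = 0`; but
then the `(0, 0)` entry of `exp Ω` is `exp (Ω 0 0) > 0`.
-/

attribute [local instance] Matrix.normedAddCommGroup Matrix.normedSpace

theorem Matrix.hasDerivAt_iff {𝕜 m n : Type*} [NontriviallyNormedField 𝕜] [Fintype m]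
    [Fintype n] {Y : 𝕜 → Matrix m n 𝕜} {Y' : Matrix m n 𝕜} {t : 𝕜} :
    HasDerivAt Y Y' t ↔ ∀ i j, HasDerivAt (fun s ↦ Y s i j) (Y' i j) t :=
  hasDerivAt_pi.trans <| forall_congr' fun _ ↦ hasDerivAt_pi

theorem HasDerivAt.matrix_mul {𝕜 l m n : Type*} [NontriviallyNormedField 𝕜] [Fintype l]
    [Fintype m] [Fintype n] {W : 𝕜 → Matrix l m 𝕜} {Y : 𝕜 → Matrix m n 𝕜}
    {W' : Matrix l m 𝕜} {Y' : Matrix m n 𝕜} {t : 𝕜}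
    (hW : HasDerivAt W W' t) (hY : HasDerivAt Y Y' t) :
    HasDerivAt (fun s ↦ W s * Y s) (W' * Y t + W t * Y') t := by
  rw [Matrix.hasDerivAt_iff] at hW hY ⊢
  intro i j
  simp only [Matrix.add_apply, Matrix.mul_apply, ← Finset.sum_add_distrib]
  exact HasDerivAt.fun_sum fun k _ ↦ add_comm (W t i k * Y' k j) _ ▸ (hW i k).mul (hY k j)

theorem Matrix.mul_eq_of_hasDerivAt {𝕜 l m n : Type*} [RCLike 𝕜] [Fintype l]
    [Fintype m] [Fintype n] {W : 𝕜 → Matrix l m 𝕜} {A : 𝕜 → Matrix m m 𝕜} {Y : 𝕜 → Matrix m n 𝕜}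
    (hW : ∀ t, HasDerivAt W (-(W t * A t)) t) (hY : ∀ t, HasDerivAt Y (A t * Y t) t) (s t : 𝕜) :
    W s * Y s = W t * Y t := by
  have hWY (t : 𝕜) : HasDerivAt (fun s ↦ W s * Y s) 0 t := by
    simpa [Matrix.mul_assoc] using (hW t).matrix_mul (hY t)
  exact is_const_of_deriv_eq_zero (fun t ↦ (hWY t).differentiableAt) (fun t ↦ (hWY t).deriv) s t

/-- `Y(t)⁻¹ = !![1, 0; t, 1] R(t)⁻¹`; that it solves `W' = -W A` is checked directly, which
spares an appeal to uniqueness of solutions. -/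
noncomputable def adjointSolution (t : ℝ) : Matrix (Fin 2) (Fin 2) ℝ :=
  !![Real.cos t, Real.sin t;
     t * Real.cos t - Real.sin t, t * Real.sin t + Real.cos t]

section

open Real

theorem hasDerivAt_adjointSolution (t : ℝ) :
    HasDerivAt adjointSolution (-(adjointSolution t * Aex t)) t := by
  have hA : Aex t = !![sin t * cos t, -cos t ^ 2; sin t ^ 2, -(sin t * cos t)] := by
    ext i j; fin_cases i <;> fin_cases j <;> simp [Aex, sin_two_mul, cos_two_mul, sin_sq] <;> ring
  have hWA : adjointSolution t * Aex t = !![sin t, -cos t; t * sin t, -(t * cos t)] := by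
    rw [hA, adjointSolution, Matrix.mul_fin_two]
    refine congrArg Matrix.of (Matrix.vec2_eq (Matrix.vec2_eq ?_ ?_) (Matrix.vec2_eq ?_ ?_))
    · linear_combination sin t * sin_sq_add_cos_sq t
    · linear_combination -cos t * sin_sq_add_cos_sq t
    · linear_combination t * sin t * sin_sq_add_cos_sq t
    · linear_combination -(t * cos t) * sin_sq_add_cos_sq t
  rw [hWA, Matrix.hasDerivAt_iff]
  intro i j
  fin_cases i <;> fin_cases j <;>
    simp only [adjointSolution, Fin.zero_eta, Fin.mk_one, Fin.isValue, Matrix.of_apply, Matrix.cons_val',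
      Matrix.cons_val_zero, Matrix.cons_val_one, Matrix.cons_val_fin_one, Matrix.neg_apply, neg_neg]
  · exact hasDerivAt_cos t
  · exact hasDerivAt_sin t
  · exact (((hasDerivAt_id' t).mul (hasDerivAt_cos t)).sub (hasDerivAt_sin t)).congr_deriv (by ring)
  · exact (((hasDerivAt_id' t).mul (hasDerivAt_sin t)).add (hasDerivAt_cos t)).congr_deriv (by ring)

theorem adjointSolution_zero : adjointSolution 0 = 1 := by
  simp [adjointSolution, Matrix.one_fin_two]

theorem adjointSolution_pi : adjointSolution π = !![-1, 0; -π, -1] := by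
  simp [adjointSolution]

end

-- `NormedSpace.exp` only sees the topology; the operator norm supplies the Banach algebra.
open scoped Matrix.Norms.Operator in
theorem Matrix.semiconjBy_exp {m : Type*} [Fintype m] [DecidableEq m]
    {x a b : Matrix m m ℝ} (h : SemiconjBy x a b) :
    SemiconjBy x (NormedSpace.exp a) (NormedSpace.exp b) :=
  h.exp_right

theorem Matrix.exp_apply_self_of_apply_eq_zero {m : Type*} [Fintype m] [DecidableEq m]
    (Ω : Matrix m m ℝ) (i : m) (h : ∀ j, j ≠ i → Ω i j = 0) :
    NormedSpace.exp Ω i i = Real.exp (Ω i i) := by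
  have hrow : SemiconjBy (single i i 1) Ω (diagonal fun _ ↦ Ω i i) := by
    ext k l
    by_cases hk : k = i
    · subst hk
      by_cases hl : l = k
      · subst hl; simp [single_mul_apply_same]
      · simp [single_mul_apply_same, h l hl, hl]
    · simp [single_mul_apply_of_ne _ _ _ _ _ hk, Ne.symm hk]
  have := congrFun (congrFun (Matrix.semiconjBy_exp hrow) i) i
  rwa [exp_diagonal, single_mul_apply_same, diagonal_mul, one_mul, single_apply_same, mul_one,
    Pi.coe_exp, ← Real.exp_eq_exp_ℝ] at this

theorem Matrix.exp_ne_of_apply_zero_zero_nonpos {a c d : ℝ} (hc : c ≠ 0) (ha : a ≤ 0)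
    (Ω : Matrix (Fin 2) (Fin 2) ℝ) : NormedSpace.exp Ω ≠ !![a, 0; c, d] := by
  intro hΩ
  have hcomm : !![a, 0; c, d] * Ω = Ω * !![a, 0; c, d] := by
    rw [← hΩ]; exact ((Commute.refl Ω).exp_right).eq.symm
  have hrow : Ω 0 1 = 0 := by
    have h00 := congrFun (congrFun hcomm 0) 0
    simp only [Fin.isValue, mul_apply, of_apply, cons_val', cons_val_fin_one, cons_val_zero,
      Fin.sum_univ_two, cons_val_one, zero_mul, add_zero] at h00
    exact (mul_eq_zero.mp (by linarith)).resolve_right hc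
  have h00 : NormedSpace.exp Ω 0 0 = a := by simp [hΩ]
  rw [exp_apply_self_of_apply_eq_zero Ω 0 fun j hj ↦ Fin.eq_one_of_ne_zero j hj ▸ hrow] at h00
  linarith [Real.exp_pos (Ω 0 0)]

theorem fundamentalSolution_Aex_pi (Y : ℝ → Matrix (Fin 2) (Fin 2) ℝ)
    (hY : ∀ t : ℝ, HasDerivAt Y (Aex t * Y t) t) (hY0 : Y 0 = 1) :
    Y Real.pi = !![-1, 0; Real.pi, -1] := by
  have hWY : adjointSolution Real.pi * Y Real.pi = 1 := by
    rw [Matrix.mul_eq_of_hasDerivAt hasDerivAt_adjointSolution hY Real.pi 0, adjointSolution_zero,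
      hY0, one_mul]
  refine (left_inv_eq_right_inv ?_ hWY).symm
  rw [adjointSolution_pi, Matrix.mul_fin_two, Matrix.one_fin_two]
  norm_num

/-- For the coefficient matrix of Example 2 (for which `∫₀^π ‖A(τ)‖₂ dτ = π`), the
fundamental solution at time `π` has no real logarithm, so the constant `π` in the
convergence condition is sharp. -/
theorem magnus_stmt11 (Y : ℝ → Matrix (Fin 2) (Fin 2) ℝ)
    (hY : ∀ t : ℝ, HasDerivAt Y (Aex t * Y t) t) (hY0 : Y 0 = 1) :
    ¬ ∃ Ω : Matrix (Fin 2) (Fin 2) ℝ, NormedSpace.exp Ω = Y Real.pi := by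
  rintro ⟨Ω, hΩ⟩
  rw [fundamentalSolution_Aex_pi Y hY hY0] at hΩ
  exact Matrix.exp_ne_of_apply_zero_zero_nonpos Real.pi_ne_zero (by norm_num) Ω hΩ
end

section
/- Let A : ℝ → Matrix n n ℂ be a continuous matrix-valued function, let t > 0, and let Y : ℂ → ℝ → Matrix n n ℂ be such that for every κ ∈ ℂ, the function s ↦ Y(κ, s) satisfies ∂Y/∂s (κ, s) = κ · A(s) · Y(κ, s) for all s and Y(κ, 0) = I. Then for each fixed s ∈ ℝ, the map κ ↦ Y(κ, s) is holomorphic on all of ℂ (i.e., each matrix entry is an entire function of κ). -/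
/-!
With the Picard iterates `p₀ = y₀`, `pₖ₊₁(u) = ∫₀ᵘ L(r) pₖ(r) dr`, the error
`y(κ, ·) - ∑_{k<N} κᵏ pₖ` is an `N`-fold iterated integral of `κ L y(κ, ·)`, hence bounded
on `[0, s]` by `B (‖κ‖ M u)ᴺ / N!`, where `M` bounds `‖L‖` on `[0, s]` and, by Grönwall,
`B = ‖y₀‖ exp (R M s)` works for all `‖κ‖ < R`. So the polynomials `κ ↦ ∑_{k<N} κᵏ pₖ(s)`
converge locally uniformly to `κ ↦ y(κ, s)`, which is therefore entire; negative `s` reduce to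
positive ones by reversing time. The matrix equation is the case `L(s) = A(s) * ·`.
-/

attribute [local instance] Matrix.normedAddCommGroup Matrix.normedSpace

open Filter Set Topology intervalIntegral

theorem norm_integral_le_mul_pow_div_factorial {F : Type*} [NormedAddCommGroup F]
    [NormedSpace ℝ F] {f : ℝ → F} {C u : ℝ} {m : ℕ} (hu : 0 ≤ u)
    (hf : ∀ r ∈ Icc 0 u, ‖f r‖ ≤ C * r ^ m / m.factorial) :
    ‖∫ r in (0 : ℝ)..u, f r‖ ≤ C * u ^ (m + 1) / (m + 1).factorial := by
  refine (norm_integral_le_of_norm_le hu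
    (Eventually.of_forall fun r hr => hf r (Ioc_subset_Icc_self hr))
    ((((continuous_pow m).const_mul C).div_const _).intervalIntegrable _ _)).trans_eq ?_
  rw [integral_div, integral_const_mul, integral_pow, zero_pow m.succ_ne_zero, sub_zero,
    Nat.factorial_succ]
  push_cast
  field_simp

section PicardIteration

variable {E : Type*} [NormedAddCommGroup E] [NormedSpace ℂ E]

noncomputable def picardIterate (L : ℝ → E →L[ℂ] E) (y₀ : E) : ℕ → ℝ → E
  | 0 => fun _ => y₀
  | k + 1 => fun u => ∫ r in (0 : ℝ)..u, L r (picardIterate L y₀ k r)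

noncomputable def picardPartialSum (L : ℝ → E →L[ℂ] E) (y₀ : E) (N : ℕ) (κ : ℂ) (u : ℝ) : E :=
  ∑ k ∈ Finset.range N, κ ^ k • picardIterate L y₀ k u

variable {L : ℝ → E →L[ℂ] E} {y₀ : E}

theorem continuous_picardIterate (hL : Continuous L) (k : ℕ) :
    Continuous (picardIterate L y₀ k) := by
  induction k with
  | zero => exact continuous_const
  | succ k ih => exact continuous_primitive (fun _ _ => (hL.clm_apply ih).intervalIntegrable _ _) 0

theorem continuous_picardPartialSum (hL : Continuous L) (N : ℕ) (κ : ℂ) :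
    Continuous (picardPartialSum L y₀ N κ) :=
  continuous_finsetSum _ fun k _ => (continuous_picardIterate hL k).const_smul _

theorem differentiable_picardPartialSum (N : ℕ) (u : ℝ) :
    Differentiable ℂ fun κ => picardPartialSum L y₀ N κ u :=
  Differentiable.fun_sum fun k _ => (differentiable_pow k).smul_const _

theorem intervalIntegrable_smul_apply (hL : Continuous L) {g : ℝ → E} (hg : Continuous g)
    (c : ℂ) (a b : ℝ) : IntervalIntegrable (fun r => c • L r (g r)) MeasureTheory.volume a b :=
  (continuous_const.smul (hL.clm_apply hg)).intervalIntegrable a b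

theorem picardPartialSum_succ (hL : Continuous L) (N : ℕ) (κ : ℂ) (u : ℝ) :
    picardPartialSum L y₀ (N + 1) κ u =
      y₀ + ∫ r in (0 : ℝ)..u, κ • L r (picardPartialSum L y₀ N κ r) := by
  simp only [picardPartialSum, Finset.sum_range_succ', pow_zero, one_smul, picardIterate,
    map_sum, map_smul, Finset.smul_sum, smul_smul, ← pow_succ', ← integral_smul]
  rw [integral_finsetSum fun k _ =>
    intervalIntegrable_smul_apply hL (continuous_picardIterate hL k) _ _ _, add_comm]

variable {κ : ℂ} {y : ℝ → E}

theorem norm_le_mul_exp_of_hasDerivAt_smul_apply (hy : ∀ s, HasDerivAt y (κ • L s (y s)) s)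
    {s M : ℝ} (hM : ∀ r ∈ Icc 0 s, ‖L r‖ ≤ M) :
    ∀ u ∈ Icc 0 s, ‖y u‖ ≤ ‖y 0‖ * Real.exp (‖κ‖ * M * u) := by
  intro u hu
  have hyc : Continuous y := Differentiable.continuous fun s => (hy s).differentiableAt
  have := norm_le_gronwallBound_of_norm_deriv_right_le (K := ‖κ‖ * M) (ε := 0)
    hyc.continuousOn (fun r _ => (hy r).hasDerivWithinAt) le_rfl (fun r hr => ?_) u hu
  · simpa [gronwallBound_ε0] using this
  calc ‖κ • L r (y r)‖ ≤ ‖κ‖ * (‖L r‖ * ‖y r‖) := by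
        rw [norm_smul]; gcongr; exact (L r).le_opNorm _
    _ ≤ ‖κ‖ * (M * ‖y r‖) := by gcongr; exact hM r (Ico_subset_Icc_self hr)
    _ = ‖κ‖ * M * ‖y r‖ + 0 := by ring

variable [CompleteSpace E]

theorem eq_add_integral_of_hasDerivAt_smul_apply (hL : Continuous L)
    (hy : ∀ s, HasDerivAt y (κ • L s (y s)) s) (u : ℝ) :
    y u = y 0 + ∫ r in (0 : ℝ)..u, κ • L r (y r) := by
  have hyc : Continuous y := Differentiable.continuous fun s => (hy s).differentiableAt
  rw [integral_eq_sub_of_hasDerivAt (fun r _ => hy r)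
    (intervalIntegrable_smul_apply hL hyc _ _ _)]
  abel

theorem sub_picardPartialSum_succ (hL : Continuous L)
    (hy : ∀ s, HasDerivAt y (κ • L s (y s)) s) (hy0 : y 0 = y₀) (N : ℕ) (u : ℝ) :
    y u - picardPartialSum L y₀ (N + 1) κ u =
      ∫ r in (0 : ℝ)..u, κ • L r (y r - picardPartialSum L y₀ N κ r) := by
  have hyc : Continuous y := Differentiable.continuous fun s => (hy s).differentiableAt
  simp only [map_sub, smul_sub]
  rw [integral_sub (intervalIntegrable_smul_apply hL hyc _ _ _)
    (intervalIntegrable_smul_apply hL (continuous_picardPartialSum hL N κ) _ _ _),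
    eq_add_integral_of_hasDerivAt_smul_apply hL hy u, picardPartialSum_succ hL, hy0]
  abel

theorem norm_sub_picardPartialSum_le (hL : Continuous L)
    (hy : ∀ s, HasDerivAt y (κ • L s (y s)) s) (hy0 : y 0 = y₀) {s M B : ℝ}
    (hM : ∀ r ∈ Icc 0 s, ‖L r‖ ≤ M) (hB : ∀ r ∈ Icc 0 s, ‖y r‖ ≤ B) (N : ℕ) :
    ∀ u ∈ Icc 0 s, ‖y u - picardPartialSum L y₀ N κ u‖ ≤
      B * (‖κ‖ * M) ^ N * u ^ N / N.factorial := by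
  induction N with
  | zero => simpa [picardPartialSum] using hB
  | succ N ih =>
    intro u hu
    rw [sub_picardPartialSum_succ hL hy hy0]
    refine (norm_integral_le_mul_pow_div_factorial (C := ‖κ‖ * M * (B * (‖κ‖ * M) ^ N))
      hu.1 fun r hr => ?_).trans_eq (by ring)
    have hrs : r ∈ Icc 0 s := ⟨hr.1, hr.2.trans hu.2⟩
    calc ‖κ • L r (y r - picardPartialSum L y₀ N κ r)‖
        ≤ ‖κ‖ * (‖L r‖ * ‖y r - picardPartialSum L y₀ N κ r‖) := by
          rw [norm_smul]; gcongr; exact (L r).le_opNorm _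
      _ ≤ ‖κ‖ * (M * (B * (‖κ‖ * M) ^ N * r ^ N / N.factorial)) := by
          gcongr
          · exact (norm_nonneg _).trans (hM r hrs)
          · exact hM r hrs
          · exact ih r hrs
      _ = ‖κ‖ * M * (B * (‖κ‖ * M) ^ N) * r ^ N / N.factorial := by ring

theorem tendstoUniformlyOn_picardPartialSum_ball (hL : Continuous L) {y : ℂ → ℝ → E}
    (hy : ∀ κ s, HasDerivAt (y κ) (κ • L s (y κ s)) s) (hy0 : ∀ κ, y κ 0 = y₀) {s : ℝ}
    (hs : 0 ≤ s) (R : ℝ) :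
    TendstoUniformlyOn (fun N κ => picardPartialSum L y₀ N κ s) (fun κ => y κ s) atTop
      (Metric.ball 0 R) := by
  obtain ⟨M, hM⟩ := (isCompact_Icc (a := 0) (b := s)).exists_bound_of_continuousOn hL.continuousOn
  have hM0 : 0 ≤ M := (norm_nonneg _).trans (hM 0 ⟨le_rfl, hs⟩)
  obtain ⟨x, hx⟩ : ∃ x, x = R * M * s := ⟨_, rfl⟩
  have hbound : ∀ N, ∀ κ ∈ Metric.ball (0 : ℂ) R, dist (y κ s) (picardPartialSum L y₀ N κ s) ≤
      ‖y₀‖ * Real.exp x * (x ^ N / N.factorial) := by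
    intro N κ hκ
    have hκR : ‖κ‖ ≤ R := (mem_ball_zero_iff.1 hκ).le
    have hκx : ∀ r ∈ Icc 0 s, ‖κ‖ * M * r ≤ x := fun r hr => hx ▸
      mul_le_mul (mul_le_mul_of_nonneg_right hκR hM0) hr.2 hr.1
        (mul_nonneg ((norm_nonneg κ).trans hκR) hM0)
    have hB : ∀ r ∈ Icc 0 s, ‖y κ r‖ ≤ ‖y₀‖ * Real.exp x := fun r hr => by
      refine (norm_le_mul_exp_of_hasDerivAt_smul_apply (hy κ) hM r hr).trans ?_
      rw [hy0]
      gcongr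
      exact hκx r hr
    rw [dist_eq_norm]
    calc _ ≤ ‖y₀‖ * Real.exp x * (‖κ‖ * M) ^ N * s ^ N / N.factorial :=
          norm_sub_picardPartialSum_le hL (hy κ) (hy0 κ) hM hB N s ⟨hs, le_rfl⟩
      _ = ‖y₀‖ * Real.exp x * ((‖κ‖ * M * s) ^ N / N.factorial) := by ring
      _ ≤ ‖y₀‖ * Real.exp x * (x ^ N / N.factorial) := by gcongr; exact hκx s ⟨hs, le_rfl⟩
  have hlim : Tendsto (fun N : ℕ => ‖y₀‖ * Real.exp x * (x ^ N / N.factorial)) atTop (𝓝 0) := by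
    simpa using (FloorSemiring.tendsto_pow_div_factorial_atTop x).const_mul (‖y₀‖ * Real.exp x)
  rw [Metric.tendstoUniformlyOn_iff]
  exact fun ε hε => (hlim.eventually (gt_mem_nhds hε)).mono fun N hN κ hκ =>
    (hbound N κ hκ).trans_lt hN

theorem differentiable_of_hasDerivAt_smul_apply (hL : Continuous L) {y : ℂ → ℝ → E}
    (hy : ∀ κ s, HasDerivAt (y κ) (κ • L s (y κ s)) s) (hy0 : ∀ κ, y κ 0 = y₀) (s : ℝ) :
    Differentiable ℂ fun κ => y κ s := by
  wlog hs : 0 ≤ s generalizing L y s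
  · have hL' : Continuous fun u => -L (-u) := (hL.comp continuous_neg).neg
    have hy' : ∀ κ u, HasDerivAt (fun v => y κ (-v)) (κ • (-L (-u)) (y κ (-u))) u := by
      intro κ u
      simpa [Function.comp_def] using (hy κ (-u)).scomp u (hasDerivAt_neg u)
    simpa using this hL' hy' (by simpa using hy0) (-s) (by linarith)
  have hlim : TendstoLocallyUniformly (fun N κ => picardPartialSum L y₀ N κ s)
      (fun κ => y κ s) atTop :=
    tendstoLocallyUniformly_of_forall_exists_nhds fun κ =>
      ⟨Metric.ball 0 (‖κ‖ + 1), Metric.isOpen_ball.mem_nhds (mem_ball_zero_iff.2 (lt_add_one _)),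
        tendstoUniformlyOn_picardPartialSum_ball hL hy hy0 hs _⟩
  exact differentiableOn_univ.1 <| (tendstoLocallyUniformlyOn_univ.2 hlim).differentiableOn
    (Eventually.of_forall fun N => (differentiable_picardPartialSum N s).differentiableOn)
    isOpen_univ

end PicardIteration

theorem magnus_stmt12_general {n : Type*} [Fintype n] [DecidableEq n]
    (A : ℝ → Matrix n n ℂ) (hA : Continuous A)
    (Y : ℂ → ℝ → Matrix n n ℂ)
    (hY : ∀ κ : ℂ, ∀ s : ℝ, HasDerivAt (Y κ) (κ • A s * Y κ s) s)
    (hY0 : ∀ κ : ℂ, Y κ 0 = 1) :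
    ∀ s : ℝ, Differentiable ℂ (fun κ => Y κ s) := by
  refine differentiable_of_hasDerivAt_smul_apply
    (L := fun s => LinearMap.toContinuousLinearMap (LinearMap.mulLeft ℂ (A s)))
    (continuous_clm_apply.2 fun X => hA.matrix_mul continuous_const) (fun κ s => ?_) hY0
  have h := hY κ s
  rw [smul_mul_assoc] at h
  exact h

/-- If `Y(κ, ·)` is the fundamental solution of `Y' = κ A(s) Y`, `Y(κ, 0) = I`, with `A`
continuous, then for each fixed `s` the map `κ ↦ Y(κ, s)` is holomorphic on all of `ℂ`. -/
theorem magnus_stmt12 {n : Type*} [Fintype n] [DecidableEq n]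
    (A : ℝ → Matrix n n ℂ) (hA : Continuous A) (t : ℝ) (ht : 0 < t)
    (Y : ℂ → ℝ → Matrix n n ℂ)
    (hY : ∀ κ : ℂ, ∀ s : ℝ, HasDerivAt (Y κ) (κ • A s * Y κ s) s)
    (hY0 : ∀ κ : ℂ, Y κ 0 = 1) :
    ∀ s : ℝ, Differentiable ℂ (fun κ => Y κ s) :=
  magnus_stmt12_general A hA Y hY hY0
end
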